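/- In the setting of the AdiaConvert construction, for every x ∈ 𝕏, s ∈ [0,1] and ε ∈ (0,1], the s-derivative of |Ψ_x^+(s,ε)⟩ satisfies ∂_s|Ψ_x^+(s,ε)⟩ = (π/2)·H_x(s,ε)|Ψ_x^−(s,ε)⟩, where H_x(s,ε) = Λ(s,ε) − Π_x. -/

import Mathlib

noncomputable section
open scoped ComplexConjugate

namespace AdiaConvert

/-- Index type of the Hilbert space `H = H_O ⊕ (ℂⁿ ⊗ ℂ^{Σ∪{0̄}} ⊗ H_W)`, where
`H_O = ℂ² ⊗ H'`, `H' = ℂ^V`, `H_W = ℂ^W`, and the blank symbol `0̄` is `Option.none`. -/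
abbrev Idx (Al V W : Type*) (n : ℕ) : Type _ := (Fin 2 × V) ⊕ (Fin n × Option Al × W)

/-- The Hilbert space of the AdiaConvert algorithm. -/
abbrev Hsp (Al V W : Type*) (n : ℕ) : Type _ := EuclideanSpace ℂ (Idx Al V W n)

/-- Build a vector of `Hsp` from its coordinates. -/
def mk {Al V W : Type*} {n : ℕ} (f : Idx Al V W n → ℂ) : Hsp Al V W n :=
  (WithLp.equiv 2 _).symm f

variable {Al V W X : Type*} {n : ℕ}

/-- `θ(s) = πs/2`. -/
def θ (s : ℝ) : ℝ := Real.pi * s / 2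

/-- `ξ(s) = 2 cos θ(s) sin θ(s)`. -/
def ξ (s : ℝ) : ℝ := 2 * Real.cos (θ s) * Real.sin (θ s)

/-- The coordinates of `|y⁺⟩ = (|0̄⟩ + |y⟩)/√2`. -/
def gP [DecidableEq Al] (y : Al) : Option Al → ℂ := fun a =>
  if a = none then (Real.sqrt 2 : ℂ)⁻¹ else if a = some y then (Real.sqrt 2 : ℂ)⁻¹ else 0

/-- The coordinates of `|y⁻⟩ = (|0̄⟩ - |y⟩)/√2`. -/
def gM [DecidableEq Al] (y : Al) : Option Al → ℂ := fun a =>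
  if a = none then (Real.sqrt 2 : ℂ)⁻¹ else if a = some y then -(Real.sqrt 2 : ℂ)⁻¹ else 0

/-- `|k_x⁺(s)⟩ = cos θ(s) |0,ρ_x⟩ + sin θ(s) |1,σ_x⟩` (embedded in `H`). -/
def kP (ρv σv : X → EuclideanSpace ℂ V) (s : ℝ) (x : X) : Hsp Al V W n :=
  mk fun q => match q with
  | .inl (b, i) => if b = 0 then (Real.cos (θ s) : ℂ) * ρv x i
                   else (Real.sin (θ s) : ℂ) * σv x i
  | .inr _ => 0

/-- `|k_x⁻(s)⟩ = -sin θ(s) |0,ρ_x⟩ + cos θ(s) |1,σ_x⟩` (embedded in `H`). -/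
def kM (ρv σv : X → EuclideanSpace ℂ V) (s : ℝ) (x : X) : Hsp Al V W n :=
  mk fun q => match q with
  | .inl (b, i) => if b = 0 then -(Real.sin (θ s) : ℂ) * ρv x i
                   else (Real.cos (θ s) : ℂ) * σv x i
  | .inr _ => 0

/-- `∑ᵢ |i⟩ ⊗ |x_i^±⟩ ⊗ |c_{x,i}⟩` (embedded in `H`), where the `ℂ^{Σ∪{0̄}}` part has
coordinates `g (x_i)`. -/
def qPart (g : Al → Option Al → ℂ) (inp : X → Fin n → Al)
    (c : X → Fin n → EuclideanSpace ℂ W) (x : X) : Hsp Al V W n :=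
  mk fun q => match q with
  | .inl _ => 0
  | .inr (i, a, w) => g (inp x i) a * c x i w

/-- The non-normalized state `|Ψ_x⁺(s,ε)⟩`. -/
def PsiP [DecidableEq Al] (ρv σv : X → EuclideanSpace ℂ V) (inp : X → Fin n → Al)
    (u : X → Fin n → EuclideanSpace ℂ W) (Wr s ε : ℝ) (x : X) : Hsp Al V W n :=
  kP ρv σv s x + ((ε / Real.sqrt Wr : ℝ) : ℂ) • qPart gP inp u x

/-- The non-normalized state `|Ψ_x⁻(s,ε)⟩`. -/
def PsiM [DecidableEq Al] (ρv σv : X → EuclideanSpace ℂ V) (inp : X → Fin n → Al)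
    (v : X → Fin n → EuclideanSpace ℂ W) (Wr s ε : ℝ) (x : X) : Hsp Al V W n :=
  kM ρv σv s x + ((ξ s * (Real.sqrt Wr / ε) : ℝ) : ℂ) • qPart gM inp v x

/-- The normalized state `|ψ_x⁺(s,ε)⟩`. -/
def psiP [Fintype Al] [Fintype V] [Fintype W] [DecidableEq Al] (ρv σv : X → EuclideanSpace ℂ V) (inp : X → Fin n → Al)
    (u : X → Fin n → EuclideanSpace ℂ W) (Wr s ε : ℝ) (x : X) : Hsp Al V W n :=
  ‖PsiP ρv σv inp u Wr s ε x‖⁻¹ • PsiP ρv σv inp u Wr s ε x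

/-- The rank-one operator `|a⟩⟨b| : v ↦ ⟨b|v⟩·a`. -/
def ketbra [Fintype Al] [Fintype V] [Fintype W]
    (a b : Hsp Al V W n) : Hsp Al V W n →L[ℂ] Hsp Al V W n :=
  (innerSL ℂ b).smulRight a

/-- The orthogonal projection `Λ(s,ε)` onto `span{|Ψ_x⁻(s,ε)⟩ : x ∈ 𝕏}`. -/
def Lam [Fintype Al] [Fintype V] [Fintype W] [DecidableEq Al]
    (ρv σv : X → EuclideanSpace ℂ V) (inp : X → Fin n → Al)
    (v : X → Fin n → EuclideanSpace ℂ W) (Wr s ε : ℝ) :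
    Hsp Al V W n →L[ℂ] Hsp Al V W n :=
  (Submodule.span ℂ (Set.range fun x : X => PsiM ρv σv inp v Wr s ε x)).subtypeL.comp
    (Submodule.orthogonalProjection
      (Submodule.span ℂ (Set.range fun x : X => PsiM ρv σv inp v Wr s ε x)))

/-- The matrix of the oracle Hamiltonian `Π_x = ∑ᵢ |i⟩⟨i| ⊗ |x_i⁻⟩⟨x_i⁻| ⊗ I_W`
(acting as `0` on `H_O`). -/
def PiMat [DecidableEq Al] [DecidableEq W] (inp : X → Fin n → Al) (x : X) :
    Matrix (Idx Al V W n) (Idx Al V W n) ℂ :=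
  fun q q' => match q, q' with
  | .inr (i, a, w), .inr (i', a', w') =>
      if i = i' ∧ w = w' then gM (inp x i) a * conj (gM (inp x i) a') else 0
  | _, _ => 0

/-- The oracle Hamiltonian `Π_x` as an operator on `H`. -/
def PiC [Fintype Al] [Fintype V] [Fintype W]
    [DecidableEq Al] [DecidableEq V] [DecidableEq W]
    (inp : X → Fin n → Al) (x : X) : Hsp Al V W n →L[ℂ] Hsp Al V W n :=
  Matrix.toEuclideanCLM (𝕜 := ℂ) (PiMat inp x)

/-- The total Hamiltonian `H_x(s,ε) = Λ(s,ε) − Π_x`. -/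
def Hx [Fintype Al] [Fintype V] [Fintype W]
    [DecidableEq Al] [DecidableEq V] [DecidableEq W]
    (ρv σv : X → EuclideanSpace ℂ V) (inp : X → Fin n → Al)
    (v : X → Fin n → EuclideanSpace ℂ W) (Wr s ε : ℝ) (x : X) :
    Hsp Al V W n →L[ℂ] Hsp Al V W n :=
  Lam ρv σv inp v Wr s ε - PiC inp x

/-- The projection `P_x(s,ε) = |ψ_x⁺(s,ε)⟩⟨ψ_x⁺(s,ε)|`. -/
def Pproj [Fintype Al] [Fintype V] [Fintype W] [DecidableEq Al]
    (ρv σv : X → EuclideanSpace ℂ V) (inp : X → Fin n → Al)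
    (u : X → Fin n → EuclideanSpace ℂ W) (Wr s ε : ℝ) (x : X) :
    Hsp Al V W n →L[ℂ] Hsp Al V W n :=
  ketbra (psiP ρv σv inp u Wr s ε x) (psiP ρv σv inp u Wr s ε x)

/-- The operator `X_x(s,ε) = (π/(2N_x(ε))) |Ψ_x⁻(s,ε)⟩⟨ψ_x⁺(s,ε)|`. -/
def Xx [Fintype Al] [Fintype V] [Fintype W] [DecidableEq Al]
    (ρv σv : X → EuclideanSpace ℂ V) (inp : X → Fin n → Al)
    (u v : X → Fin n → EuclideanSpace ℂ W) (Wr s ε : ℝ) (x : X) :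
    Hsp Al V W n →L[ℂ] Hsp Al V W n :=
  ((Real.pi / (2 * ‖PsiP ρv σv inp u Wr s ε x‖) : ℝ) : ℂ) •
    ketbra (PsiM ρv σv inp v Wr s ε x) (psiP ρv σv inp u Wr s ε x)

end AdiaConvert

open AdiaConvert

/-!
`Ψ_x⁺(s,ε)` depends on `s` only through `k_x⁺(s)`, which rotates in the plane spanned by
`|0,ρ_x⟩` and `|1,σ_x⟩` with angular speed `π/2`; hence `∂ₛΨ_x⁺ = (π/2)·k_x⁻(s)`. On the other
side, `Λ(s,ε)` fixes `Ψ_x⁻(s,ε)`, while `Π_x` annihilates `k_x⁻(s) ∈ H_O` and fixes the query part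
of `Ψ_x⁻` because `|x_i⁻⟩` is a unit vector. So `H_x(s,ε)Ψ_x⁻(s,ε) = k_x⁻(s)`.
-/

theorem HasDerivAt.cos_smul_add_sin_smul {E : Type*} [NormedAddCommGroup E] [NormedSpace ℝ E]
    {f : ℝ → ℝ} {f' s : ℝ} (hf : HasDerivAt f f' s) (a b : E) :
    HasDerivAt (fun t => Real.cos (f t) • a + Real.sin (f t) • b)
      (f' • (-Real.sin (f s) • a + Real.cos (f s) • b)) s := by
  convert (hf.cos.smul_const a).fun_add (hf.sin.smul_const b) using 1
  rw [smul_add, smul_smul, smul_smul, mul_comm f', mul_comm f', neg_mul]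

namespace AdiaConvert

variable {Al V W X : Type*} {n : ℕ}

theorem hasDerivAt_θ (s : ℝ) : HasDerivAt θ (Real.pi / 2) s := by
  show HasDerivAt (fun t => Real.pi * t / 2) _ s
  simpa using ((hasDerivAt_id s).const_mul Real.pi).div_const 2

-- At `s = 0` the two states are `kP ρv σv 0 x = |0,ρ_x⟩` and `kM ρv σv 0 x = |1,σ_x⟩`.
theorem kP_eq_cos_smul_add_sin_smul (ρv σv : X → EuclideanSpace ℂ V) (s : ℝ) (x : X) :
    (kP ρv σv s x : Hsp Al V W n) =
      Real.cos (θ s) • kP ρv σv 0 x + Real.sin (θ s) • kM ρv σv 0 x := by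
  ext (⟨b, i⟩ | _) <;> simp [kP, kM, mk, θ, Complex.real_smul]
  split_ifs <;> simp

theorem kM_eq_neg_sin_smul_add_cos_smul (ρv σv : X → EuclideanSpace ℂ V) (s : ℝ) (x : X) :
    (kM ρv σv s x : Hsp Al V W n) =
      -Real.sin (θ s) • kP ρv σv 0 x + Real.cos (θ s) • kM ρv σv 0 x := by
  ext (⟨b, i⟩ | _) <;> simp [kP, kM, mk, θ, Complex.real_smul]
  split_ifs <;> simp

theorem hasDerivAt_kP [Fintype Al] [Fintype V] [Fintype W]
    (ρv σv : X → EuclideanSpace ℂ V) (s : ℝ) (x : X) :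
    HasDerivAt (fun t => (kP ρv σv t x : Hsp Al V W n)) ((Real.pi / 2 : ℝ) • kM ρv σv s x) s := by
  rw [kM_eq_neg_sin_smul_add_cos_smul, funext fun t => kP_eq_cos_smul_add_sin_smul ρv σv t x]
  exact (hasDerivAt_θ s).cos_smul_add_sin_smul _ _

theorem sum_conj_gM_mul_gM [Fintype Al] [DecidableEq Al] (y : Al) :
    ∑ a, conj (gM y a) * gM y a = 1 := by
  have h : (Real.sqrt 2 : ℂ)⁻¹ * (Real.sqrt 2 : ℂ)⁻¹ = 2⁻¹ := by
    rw [← mul_inv, ← Complex.ofReal_mul, Real.mul_self_sqrt zero_le_two]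
    norm_num
  rw [Fintype.sum_option, ← Finset.add_sum_erase _ _ (Finset.mem_univ y), Finset.sum_eq_zero]
  · simp [gM, h]
    norm_num
  · intro a ha
    simp [gM, Finset.ne_of_mem_erase ha]

theorem Lam_apply_PsiM [Fintype Al] [Fintype V] [Fintype W] [DecidableEq Al]
    (ρv σv : X → EuclideanSpace ℂ V) (inp : X → Fin n → Al)
    (v : X → Fin n → EuclideanSpace ℂ W) (Wr s ε : ℝ) (x : X) :
    Lam ρv σv inp v Wr s ε (PsiM ρv σv inp v Wr s ε x) = PsiM ρv σv inp v Wr s ε x :=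
  Submodule.starProjection_eq_self_iff.mpr (Submodule.subset_span ⟨x, rfl⟩)

section
variable [Fintype Al] [Fintype V] [Fintype W] [DecidableEq Al] [DecidableEq V] [DecidableEq W]
  (inp : X → Fin n → Al) (x : X)

theorem PiC_apply_inl (z : Hsp Al V W n) (p : Fin 2 × V) : PiC inp x z (.inl p) = 0 := by
  simp [PiC, Matrix.mulVec, dotProduct, PiMat]

theorem PiC_apply_inr (z : Hsp Al V W n) (i : Fin n) (a : Option Al) (w : W) :
    PiC inp x z (.inr (i, a, w)) =
      gM (inp x i) a * ∑ a', conj (gM (inp x i) a') * z (.inr (i, a', w)) := by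
  simp [PiC, Matrix.mulVec, dotProduct, PiMat, Fintype.sum_sum_type, Fintype.sum_prod_type,
    ite_and, mul_assoc, mul_add, Finset.mul_sum]

theorem PiC_apply_kM (ρv σv : X → EuclideanSpace ℂ V) (s : ℝ) :
    PiC inp x (kM ρv σv s x : Hsp Al V W n) = 0 := by
  ext (_ | ⟨i, a, w⟩)
  · exact PiC_apply_inl inp x _ _
  · simp [PiC_apply_inr, kM, mk]

theorem PiC_apply_qPart_gM (c : X → Fin n → EuclideanSpace ℂ W) :
    PiC inp x (qPart gM inp c x : Hsp Al V W n) = qPart gM inp c x := by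
  ext (_ | ⟨i, a, w⟩)
  · simp [PiC_apply_inl, qPart, mk]
  · simp only [PiC_apply_inr, qPart, mk, WithLp.equiv_symm_apply, ← mul_assoc, ← Finset.sum_mul,
      sum_conj_gM_mul_gM, one_mul]

theorem Hx_apply_PsiM (ρv σv : X → EuclideanSpace ℂ V) (v : X → Fin n → EuclideanSpace ℂ W)
    (Wr s ε : ℝ) : Hx ρv σv inp v Wr s ε x (PsiM ρv σv inp v Wr s ε x) = kM ρv σv s x := by
  rw [Hx, sub_apply, Lam_apply_PsiM]
  nth_rw 2 [PsiM]
  rw [map_add, map_smul, PiC_apply_kM, PiC_apply_qPart_gM, zero_add, PsiM, add_sub_cancel_right]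

end

end AdiaConvert

theorem stmt16_general
    {Al V W : Type*} [Fintype Al] [DecidableEq Al] [Fintype V] [DecidableEq V]
    [Fintype W] [DecidableEq W]
    {n : ℕ} {X : Type*} (inp : X → Fin n → Al)
    (ρv σv : X → EuclideanSpace ℂ V)
    (Wr : ℝ)
    (u v : X → Fin n → EuclideanSpace ℂ W)
    (ε : ℝ) :
    ∀ x : X, ∀ s ∈ Set.Icc (0:ℝ) 1,
      HasDerivWithinAt (fun t => PsiP ρv σv inp u Wr t ε x)
        ((Real.pi / 2 : ℝ) •
          Hx ρv σv inp v Wr s ε x (PsiM ρv σv inp v Wr s ε x))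
        (Set.Icc 0 1) s := by
  intro x s _
  rw [Hx_apply_PsiM]
  exact ((hasDerivAt_kP ρv σv s x).add_const _).hasDerivWithinAt

/-- `∂ₛ|Ψ_x⁺(s,ε)⟩ = (π/2)·H_x(s,ε)|Ψ_x⁻(s,ε)⟩`. -/
theorem stmt16
    {Al V W : Type*} [Fintype Al] [DecidableEq Al] [Fintype V] [DecidableEq V]
    [Fintype W] [DecidableEq W]
    {n : ℕ} {X : Type*} [Fintype X] (inp : X → Fin n → Al)
    (ρv σv : X → EuclideanSpace ℂ V)
    (hρ : ∀ x, ‖ρv x‖ = 1) (hσ : ∀ x, ‖σv x‖ = 1)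
    (Wr : ℝ) (hW : 0 < Wr)
    (u v : X → Fin n → EuclideanSpace ℂ W)
    (hu : ∀ x, ∑ i, ‖u x i‖ ^ 2 ≤ Wr) (hv : ∀ x, ∑ i, ‖v x i‖ ^ 2 ≤ Wr)
    (hadv : ∀ x y : X,
      (inner ℂ (ρv x) (ρv y) : ℂ) - (inner ℂ (σv x) (σv y) : ℂ) =
        ∑ i ∈ Finset.univ.filter (fun i => inp x i ≠ inp y i),
          (inner ℂ (u x i) (v y i) : ℂ))
    (ε : ℝ) (hε0 : 0 < ε) (hε1 : ε ≤ 1) :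
    ∀ x : X, ∀ s ∈ Set.Icc (0:ℝ) 1,
      HasDerivWithinAt (fun t => PsiP ρv σv inp u Wr t ε x)
        ((Real.pi / 2 : ℝ) •
          Hx ρv σv inp v Wr s ε x (PsiM ρv σv inp v Wr s ε x))
        (Set.Icc 0 1) s :=
  stmt16_general inp ρv σv Wr u v ε
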